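/- arXiv:1402.2088 — 4 statements merged into one kernel-verified Lean document; each statement's English description precedes it below -/
import Mathlib

section
/- Let f : ℝⁿ → ℝ satisfy f(w) ≥ 0 for all w, and suppose f attains its global minimum at w*, i.e. f(w*) ≤ f(w) for all w ∈ ℝⁿ. Then for every point p = (w, y) in the epigraph C_f = {(w, y) : f(w) ≤ y} and every point q = (u, t) in the level set C_s = {(u, t) : t ≤ 0}, one has ‖p − q‖ ≥ f(w*); moreover the pair p* = (w*, f(w*)) ∈ C_f, q* = (w*, 0) ∈ C_s achieves ‖p* − q*‖ = f(w*). Hence the distance between the sets C_f and C_s equals the minimum value f(w*). -/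
/-- The space `ℝⁿ × ℝ` with the Euclidean (ℓ²) product norm. -/
abbrev LiftedSpace (n : ℕ) : Type := WithLp 2 (EuclideanSpace ℝ (Fin n) × ℝ)

/-- The epigraph `C_f = {(w, y) : f w ≤ y}` in `ℝⁿ × ℝ` with the ℓ² product norm. -/
def epigraphSet (n : ℕ) (f : EuclideanSpace ℝ (Fin n) → ℝ) : Set (LiftedSpace n) :=
  {p | f (WithLp.equiv 2 _ p).1 ≤ (WithLp.equiv 2 _ p).2}

/-- The level set `C_s = {(w, y) : y ≤ 0}` in `ℝⁿ × ℝ` with the ℓ² product norm. -/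
def levelSet (n : ℕ) : Set (LiftedSpace n) :=
  {p | (WithLp.equiv 2 _ p).2 ≤ 0}

/-! The distance between `C_f` and `C_s` is realised vertically: for `p ∈ C_f` and `q ∈ C_s`
the last coordinate of `p - q` is at least `f (p.fst) ≥ f w*`, and the vertical segment from
`(w*, f w*)` down to `(w*, 0)` has exactly this length. -/

lemma WithLp.norm_toLp_sub_toLp_of_fst_eq {p : ENNReal} [Fact (1 ≤ p)] {α β : Type*}
    [SeminormedAddCommGroup α] [SeminormedAddCommGroup β] (x : α) (y₁ y₂ : β) :
    ‖toLp p (x, y₁) - toLp p (x, y₂)‖ = ‖y₁ - y₂‖ := by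
  rw [← toLp_sub, Prod.mk_sub_mk, sub_self, norm_toLp_snd]

section

variable {n : ℕ}

lemma mem_epigraphSet {f : EuclideanSpace ℝ (Fin n) → ℝ} {p : LiftedSpace n} :
    p ∈ epigraphSet n f ↔ f p.fst ≤ p.snd :=
  Iff.rfl

lemma mem_levelSet {p : LiftedSpace n} : p ∈ levelSet n ↔ p.snd ≤ 0 :=
  Iff.rfl

lemma le_norm_sub_of_mem_epigraphSet_of_mem_levelSet {f : EuclideanSpace ℝ (Fin n) → ℝ}
    {p q : LiftedSpace n} (hp : p ∈ epigraphSet n f) (hq : q ∈ levelSet n) :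
    f p.fst ≤ ‖p - q‖ :=
  calc f p.fst ≤ (p - q).snd := by
        rw [WithLp.sub_snd]; linarith [mem_epigraphSet.1 hp, mem_levelSet.1 hq]
    _ ≤ ‖(p - q).snd‖ := le_abs_self _
    _ ≤ ‖p - q‖ := WithLp.norm_snd_le _ _

end

/-- If `f ≥ 0` attains its global minimum at `wstar`, then every `p ∈ C_f` and `q ∈ C_s`
satisfy `‖p - q‖ ≥ f wstar`; the pair `(wstar, f wstar) ∈ C_f`, `(wstar, 0) ∈ C_s` achieves
this bound, and hence the distance between the two sets equals `f wstar`. -/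
theorem dist_epigraph_levelSet_eq_min (n : ℕ) (f : EuclideanSpace ℝ (Fin n) → ℝ)
    (hf0 : ∀ w, 0 ≤ f w) (wstar : EuclideanSpace ℝ (Fin n))
    (hmin : ∀ w, f wstar ≤ f w) :
    (∀ p ∈ epigraphSet n f, ∀ q ∈ levelSet n, f wstar ≤ ‖p - q‖) ∧
    ((WithLp.equiv 2 (EuclideanSpace ℝ (Fin n) × ℝ)).symm (wstar, f wstar) ∈ epigraphSet n f ∧
     (WithLp.equiv 2 (EuclideanSpace ℝ (Fin n) × ℝ)).symm (wstar, 0) ∈ levelSet n ∧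
     ‖(WithLp.equiv 2 (EuclideanSpace ℝ (Fin n) × ℝ)).symm (wstar, f wstar) -
        (WithLp.equiv 2 (EuclideanSpace ℝ (Fin n) × ℝ)).symm (wstar, 0)‖ = f wstar) ∧
    sInf {d : ℝ | ∃ p ∈ epigraphSet n f, ∃ q ∈ levelSet n, d = ‖p - q‖} = f wstar := by
  have hlower : ∀ p ∈ epigraphSet n f, ∀ q ∈ levelSet n, f wstar ≤ ‖p - q‖ := fun p hp q hq ↦
    (hmin _).trans (le_norm_sub_of_mem_epigraphSet_of_mem_levelSet hp hq)
  have hpstar : (WithLp.equiv 2 _).symm (wstar, f wstar) ∈ epigraphSet n f :=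
    mem_epigraphSet.2 le_rfl
  have hqstar : (WithLp.equiv 2 _).symm (wstar, (0 : ℝ)) ∈ levelSet n := mem_levelSet.2 le_rfl
  have hattained : ‖(WithLp.equiv 2 (EuclideanSpace ℝ (Fin n) × ℝ)).symm (wstar, f wstar) -
      (WithLp.equiv 2 (EuclideanSpace ℝ (Fin n) × ℝ)).symm (wstar, 0)‖ = f wstar := by
    rw [WithLp.equiv_symm_apply, WithLp.norm_toLp_sub_toLp_of_fst_eq, sub_zero,
      Real.norm_of_nonneg (hf0 wstar)]
  refine ⟨hlower, ⟨hpstar, hqstar, hattained⟩,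
    IsLeast.csInf_eq ⟨⟨_, hpstar, _, hqstar, hattained.symm⟩, ?_⟩⟩
  rintro d ⟨p, hp, q, hq, rfl⟩
  exact hlower p hp q hq
end

section
/- (Bregman's POCS convergence theorem) Let K₁ and K₂ be nonempty closed convex subsets of ℝⁿ with K₁ ∩ K₂ ≠ ∅, and let P₁ and P₂ be the metric projections onto K₁ and K₂. Define the alternating projection sequence from any x₀ ∈ ℝⁿ by x_{n+1} = P₁ x_n when n is even and x_{n+1} = P₂ x_n when n is odd. Then the sequence (x_n) converges to a point x* ∈ K₁ ∩ K₂. -/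
/-!
Each projection step satisfies the Pythagorean-type inequality
`‖x⁺ - z‖² + ‖x - x⁺‖² ≤ ‖x - z‖²` for every `z ∈ K₁ ∩ K₂` (variational characterisation of
the projection onto a convex set). Hence the distances to every point of the intersection
decrease and the step lengths are square-summable, so tend to `0`. The odd terms lie in `K₁` and
are bounded, so a subsequence converges to some `a ∈ K₁`; the following terms lie in `K₂` and have
the same limit, so `a ∈ K₁ ∩ K₂`. As `‖xₘ - a‖` is decreasing and tends to `0` along a
subsequence, the whole sequence converges to `a`.
-/

open Filter Topology RealInnerProductSpace

theorem norm_sub_sq_add_norm_sub_sq_le {E : Type*} [NormedAddCommGroup E] [InnerProductSpace ℝ E]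
    {K : Set E} (hK : Convex ℝ K) {x p z : E} (hp : p ∈ K)
    (hmin : ∀ y ∈ K, ‖x - p‖ ≤ ‖x - y‖) (hz : z ∈ K) :
    ‖p - z‖ ^ 2 + ‖x - p‖ ^ 2 ≤ ‖x - z‖ ^ 2 := by
  have : Nonempty K := ⟨⟨p, hp⟩⟩
  have hbdd : BddBelow (Set.range fun w : K => ‖x - (w : E)‖) :=
    ⟨0, Set.forall_mem_range.mpr fun _ => norm_nonneg _⟩
  have hinf : ‖x - p‖ = ⨅ w : K, ‖x - (w : E)‖ :=
    le_antisymm (le_ciInf fun w => hmin w w.2) (ciInf_le hbdd ⟨p, hp⟩)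
  have hinner : ⟪x - p, z - p⟫ ≤ 0 := (norm_eq_iInf_iff_real_inner_le_zero hK hp).mp hinf z hz
  have hexpand : ‖x - z‖ ^ 2 = ‖x - p‖ ^ 2 - 2 * ⟪x - p, z - p⟫ + ‖p - z‖ ^ 2 := by
    rw [show x - z = (x - p) - (z - p) by abel, norm_sub_sq_real, ← norm_neg (z - p), neg_sub]
  linarith

section FejerSequence

variable {X : Type*} [PseudoMetricSpace X] {x : ℕ → X} {z : X}

theorem antitone_dist_of_sq_add_sq_le
    (h : ∀ m, dist (x (m + 1)) z ^ 2 + dist (x m) (x (m + 1)) ^ 2 ≤ dist (x m) z ^ 2) :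
    Antitone fun m => dist (x m) z :=
  antitone_nat_of_succ_le fun m =>
    (pow_le_pow_iff_left₀ dist_nonneg dist_nonneg two_ne_zero).mp
      (by linarith [h m, sq_nonneg (dist (x m) (x (m + 1)))])

theorem tendsto_dist_succ_of_sq_add_sq_le
    (h : ∀ m, dist (x (m + 1)) z ^ 2 + dist (x m) (x (m + 1)) ^ 2 ≤ dist (x m) z ^ 2) :
    Tendsto (fun m => dist (x m) (x (m + 1))) atTop (𝓝 0) := by
  have htelescope : ∀ N, ∑ m ∈ Finset.range N, dist (x m) (x (m + 1)) ^ 2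
      ≤ dist (x 0) z ^ 2 - dist (x N) z ^ 2 := by
    intro N
    induction N with
    | zero => simp
    | succ N ih => rw [Finset.sum_range_succ]; linarith [h N]
  have hsummable : Summable fun m => dist (x m) (x (m + 1)) ^ 2 :=
    summable_of_sum_range_le (fun _ => sq_nonneg _)
      fun N => (htelescope N).trans (sub_le_self _ (sq_nonneg _))
  simpa [Real.sqrt_sq dist_nonneg] using hsummable.tendsto_atTop_zero.sqrt

theorem tendsto_of_antitone_dist_of_tendsto_comp {a : X} {φ : ℕ → ℕ}
    (hanti : Antitone fun m => dist (x m) a) (hφ : Tendsto φ atTop atTop)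
    (hxφ : Tendsto (x ∘ φ) atTop (𝓝 a)) : Tendsto x atTop (𝓝 a) := by
  have hlim : Tendsto (fun m => dist (x m) a) atTop (𝓝 (⨅ m, dist (x m) a)) :=
    tendsto_atTop_ciInf hanti ⟨0, Set.forall_mem_range.mpr fun _ => dist_nonneg⟩
  have hinf : (⨅ m, dist (x m) a) = 0 :=
    tendsto_nhds_unique (hlim.comp hφ) (tendsto_iff_dist_tendsto_zero.mp hxφ)
  rw [tendsto_iff_dist_tendsto_zero, ← hinf]
  exact hlim

end FejerSequence

theorem exists_mem_inter_tendsto_comp_of_alternating {X : Type*} [PseudoMetricSpace X]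
    [ProperSpace X] {K₁ K₂ : Set X} (h₁ : IsClosed K₁) (h₂ : IsClosed K₂) {x : ℕ → X}
    (hbdd : Bornology.IsBounded (Set.range x))
    (hstep : Tendsto (fun m => dist (x m) (x (m + 1))) atTop (𝓝 0))
    (hmem : ∀ m, x (2 * m + 1) ∈ K₁ ∧ x (2 * m + 2) ∈ K₂) :
    ∃ a ∈ K₁ ∩ K₂, ∃ ψ : ℕ → ℕ, Tendsto ψ atTop atTop ∧ Tendsto (x ∘ ψ) atTop (𝓝 a) := by
  obtain ⟨a, -, φ, hφ, hxφ⟩ :=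
    tendsto_subseq_of_bounded hbdd (x := fun m => x (2 * m + 1)) fun m => ⟨_, rfl⟩
  have hψ : Tendsto (fun k => 2 * φ k + 1) atTop atTop :=
    tendsto_atTop_mono (fun k => by omega) hφ.tendsto_atTop
  have hxφ_succ : Tendsto (fun k => x (2 * φ k + 2)) atTop (𝓝 a) :=
    hxφ.congr_dist (hstep.comp hψ)
  refine ⟨a, ⟨?_, ?_⟩, _, hψ, hxφ⟩
  · exact h₁.mem_of_tendsto hxφ (Eventually.of_forall fun k => (hmem (φ k)).1)
  · exact h₂.mem_of_tendsto hxφ_succ (Eventually.of_forall fun k => (hmem (φ k)).2)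

theorem pocs_converges_general (n : ℕ) (K₁ K₂ : Set (EuclideanSpace ℝ (Fin n)))
    (hclosed₁ : IsClosed K₁) (hclosed₂ : IsClosed K₂)
    (hconv₁ : Convex ℝ K₁) (hconv₂ : Convex ℝ K₂)
    (hint : (K₁ ∩ K₂).Nonempty)
    (P₁ P₂ : EuclideanSpace ℝ (Fin n) → EuclideanSpace ℝ (Fin n))
    (hP₁ : ∀ x, P₁ x ∈ K₁ ∧ ∀ y ∈ K₁, ‖x - P₁ x‖ ≤ ‖x - y‖)
    (hP₂ : ∀ x, P₂ x ∈ K₂ ∧ ∀ y ∈ K₂, ‖x - P₂ x‖ ≤ ‖x - y‖)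
    (x : ℕ → EuclideanSpace ℝ (Fin n))
    (hx : ∀ m : ℕ, x (m + 1) = if Even m then P₁ (x m) else P₂ (x m)) :
    ∃ xstar : EuclideanSpace ℝ (Fin n), xstar ∈ K₁ ∩ K₂ ∧
      Tendsto x atTop (𝓝 xstar) := by
  have hstep : ∀ z ∈ K₁ ∩ K₂, ∀ m,
      dist (x (m + 1)) z ^ 2 + dist (x m) (x (m + 1)) ^ 2 ≤ dist (x m) z ^ 2 := by
    intro z hz m
    simp only [dist_eq_norm, hx m]
    split_ifs
    · exact norm_sub_sq_add_norm_sub_sq_le hconv₁ (hP₁ _).1 (hP₁ _).2 hz.1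
    · exact norm_sub_sq_add_norm_sub_sq_le hconv₂ (hP₂ _).1 (hP₂ _).2 hz.2
  have hmem : ∀ m, x (2 * m + 1) ∈ K₁ ∧ x (2 * m + 2) ∈ K₂ := fun m =>
    ⟨by rw [hx, if_pos (even_two_mul m)]; exact (hP₁ _).1,
      by rw [hx (2 * m + 1), if_neg (Nat.not_even_two_mul_add_one m)]; exact (hP₂ _).1⟩
  obtain ⟨z, hz⟩ := hint
  have hbdd : Bornology.IsBounded (Set.range x) :=
    Metric.isBounded_closedBall.subset <| Set.range_subset_iff.mpr fun m =>
      Metric.mem_closedBall.mpr <| antitone_dist_of_sq_add_sq_le (hstep z hz) (Nat.zero_le m)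
  obtain ⟨a, ha, ψ, hψ, hxψ⟩ := exists_mem_inter_tendsto_comp_of_alternating hclosed₁ hclosed₂
    hbdd (tendsto_dist_succ_of_sq_add_sq_le (hstep z hz)) hmem
  exact ⟨a, ha, tendsto_of_antitone_dist_of_tendsto_comp
    (antitone_dist_of_sq_add_sq_le (hstep a ha)) hψ hxψ⟩

/-- Bregman's POCS convergence theorem: if `K₁ ∩ K₂ ≠ ∅`, the alternating projection
sequence converges to a point of `K₁ ∩ K₂`. -/
theorem pocs_converges (n : ℕ) (K₁ K₂ : Set (EuclideanSpace ℝ (Fin n)))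
    (hne₁ : K₁.Nonempty) (hne₂ : K₂.Nonempty)
    (hclosed₁ : IsClosed K₁) (hclosed₂ : IsClosed K₂)
    (hconv₁ : Convex ℝ K₁) (hconv₂ : Convex ℝ K₂)
    (hint : (K₁ ∩ K₂).Nonempty)
    (P₁ P₂ : EuclideanSpace ℝ (Fin n) → EuclideanSpace ℝ (Fin n))
    (hP₁ : ∀ x, P₁ x ∈ K₁ ∧ ∀ y ∈ K₁, ‖x - P₁ x‖ ≤ ‖x - y‖)
    (hP₂ : ∀ x, P₂ x ∈ K₂ ∧ ∀ y ∈ K₂, ‖x - P₂ x‖ ≤ ‖x - y‖)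
    (x : ℕ → EuclideanSpace ℝ (Fin n))
    (hx : ∀ m : ℕ, x (m + 1) = if Even m then P₁ (x m) else P₂ (x m)) :
    ∃ xstar : EuclideanSpace ℝ (Fin n), xstar ∈ K₁ ∩ K₂ ∧
      Tendsto x atTop (𝓝 xstar) :=
  pocs_converges_general n K₁ K₂ hclosed₁ hclosed₂ hconv₁ hconv₂ hint P₁ P₂ hP₁ hP₂ x hx
end

section
/- (Gubin–Polyak–Raik, non-intersecting case) Let K₁ and K₂ be nonempty closed convex subsets of ℝⁿ with K₁ ∩ K₂ = ∅, and suppose K₁ is bounded (hence compact). Let P₁, P₂ be the metric projections onto K₁, K₂, and define the alternating projection sequence from any x₀ by x_{n+1} = P₁ x_n for n even and x_{n+1} = P₂ x_n for n odd. Then the odd-indexed iterates converge to a point a ∈ K₁ and the even-indexed iterates (from index 2 on) converge to a point b ∈ K₂ such that ‖a − b‖ = inf{‖u − v‖ : u ∈ K₁, v ∈ K₂}; i.e. the iterates oscillate between a pair of nearest points of the two sets. -/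
/-!
Write `T = P₁ ∘ P₂` for the map taking an odd iterate to the next one, and `V q = ‖q - P₂ q‖`
for the distance from `q` to `K₂`. On `K₁` the function `V` does not increase under `T`, and by
uniqueness of nearest points it stays constant only at fixed points of `T`. Compactness of `K₁`
yields a cluster point `a` of the odd iterates, and continuity of `V ∘ T` forces `V (T a) = V a`,
so `a` is a fixed point. Projections onto convex sets are nonexpansive, hence so is `T`, and the
distance of the iterates to the fixed point `a` decreases; as it tends to `0` along a subsequence,
the odd iterates converge to `a`, the even ones to `b = P₂ a`. Finally, the variational
inequalities for `a = P₁ b` and `b = P₂ a` separate `K₁` from `K₂` by a slab of width `‖a - b‖`.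
-/

open Filter Topology

open scoped RealInnerProductSpace

theorem exists_isFixedPt_tendsto_subseq_of_lyapunov {X : Type*} [TopologicalSpace X]
    {T : X → X} {V : X → ℝ} {K : Set X} (hK : IsSeqCompact K) (hT : Continuous T)
    (hV : Continuous V) (hdecr : ∀ q ∈ K, V (T q) ≤ V q)
    (hfix : ∀ q ∈ K, V (T q) = V q → T q = q)
    {y : ℕ → X} (hyK : ∀ m, y m ∈ K) (hy : ∀ m, y (m + 1) = T (y m)) :
    ∃ a ∈ K, Function.IsFixedPt T a ∧ ∃ φ : ℕ → ℕ, StrictMono φ ∧ Tendsto (y ∘ φ) atTop (𝓝 a) := by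
  obtain ⟨a, ha, φ, hφ, hya⟩ := hK hyK
  have hVy : Antitone (V ∘ y) :=
    antitone_nat_of_succ_le fun m => by simpa only [Function.comp, hy] using hdecr _ (hyK m)
  have hlim : Tendsto (V ∘ y) atTop (𝓝 (V a)) :=
    (tendsto_iff_tendsto_subseq_of_antitone hVy hφ.tendsto_atTop).2 ((hV.tendsto a).comp hya)
  have hshift : Tendsto (fun m => V (y (φ m + 1))) atTop (𝓝 (V (T a))) := by
    simpa only [hy, Function.comp_def] using ((hV.comp hT).tendsto a).comp hya
  have hVa : V (T a) = V a :=
    tendsto_nhds_unique hshift (hlim.comp ((tendsto_add_atTop_nat 1).comp hφ.tendsto_atTop))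
  exact ⟨a, ha, hfix a ha hVa, φ, hφ, hya⟩

theorem tendsto_of_lipschitzWith_one_of_tendsto_subseq {X : Type*} [PseudoMetricSpace X]
    {T : X → X} (hT : LipschitzWith 1 T) {a : X} (ha : Function.IsFixedPt T a)
    {y : ℕ → X} (hy : ∀ m, y (m + 1) = T (y m)) {φ : ℕ → ℕ} (hφ : StrictMono φ)
    (hya : Tendsto (y ∘ φ) atTop (𝓝 a)) : Tendsto y atTop (𝓝 a) := by
  rw [tendsto_iff_dist_tendsto_zero] at hya ⊢
  have hdist : Antitone fun m => dist (y m) a := antitone_nat_of_succ_le fun m => by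
    calc dist (y (m + 1)) a = dist (T (y m)) (T a) := by rw [hy, ha.eq]
      _ ≤ dist (y m) a := by simpa using hT.dist_le_mul (y m) a
  exact (tendsto_iff_tendsto_subseq_of_antitone hdist hφ.tendsto_atTop).2 hya

section SeminormedAddCommGroup

variable {E : Type*} [SeminormedAddCommGroup E]

def IsNearestPointMap (K : Set E) (P : E → E) : Prop :=
  ∀ x, P x ∈ K ∧ ∀ y ∈ K, ‖x - P x‖ ≤ ‖x - y‖

namespace IsNearestPointMap

variable {K : Set E} {P : E → E}

theorem mem (hP : IsNearestPointMap K P) (x : E) : P x ∈ K := (hP x).1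

theorem norm_sub_le (hP : IsNearestPointMap K P) (x : E) {y : E} (hy : y ∈ K) :
    ‖x - P x‖ ≤ ‖x - y‖ :=
  (hP x).2 y hy

end IsNearestPointMap

theorem norm_sub_proj_comp_le {K₁ K₂ : Set E} {P₁ P₂ : E → E}
    (hP₁ : IsNearestPointMap K₁ P₁) (hP₂ : IsNearestPointMap K₂ P₂) {q : E} (hq : q ∈ K₁) :
    ‖P₁ (P₂ q) - P₂ (P₁ (P₂ q))‖ ≤ ‖q - P₂ q‖ :=
  calc ‖P₁ (P₂ q) - P₂ (P₁ (P₂ q))‖ ≤ ‖P₁ (P₂ q) - P₂ q‖ := hP₂.norm_sub_le _ (hP₂.mem q)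
    _ = ‖P₂ q - P₁ (P₂ q)‖ := norm_sub_rev _ _
    _ ≤ ‖P₂ q - q‖ := hP₁.norm_sub_le _ hq
    _ = ‖q - P₂ q‖ := norm_sub_rev _ _

end SeminormedAddCommGroup

section InnerProductSpace

variable {E : Type*} [NormedAddCommGroup E] [InnerProductSpace ℝ E]

/-- The hyperplanes through `p` and `q` orthogonal to `p - q` bound a slab of width `‖p - q‖`
which separates `u` from `v`. -/
theorem norm_sub_le_of_inner_nonpos {p q u v : E} (hp : ⟪u - p, q - p⟫ ≤ 0)
    (hq : ⟪v - q, p - q⟫ ≤ 0) : ‖p - q‖ ≤ ‖u - v‖ := by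
  have hsplit : ⟪u - v, p - q⟫ = ‖p - q‖ ^ 2 - ⟪u - p, q - p⟫ - ⟪v - q, p - q⟫ := by
    have huv : u - v = (p - q) + (u - p) - (v - q) := by abel
    rw [huv, inner_sub_left, inner_add_left, real_inner_self_eq_norm_sq, ← neg_sub p q,
      inner_neg_right]
    ring
  have hcs := real_inner_le_norm (u - v) (p - q)
  nlinarith [norm_nonneg (p - q), norm_nonneg (u - v)]

namespace IsNearestPointMap

variable {K : Set E} {P : E → E}

theorem inner_sub_nonpos (hP : IsNearestPointMap K P) (hK : Convex ℝ K) (x : E) {z : E}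
    (hz : z ∈ K) : ⟪x - P x, z - P x⟫ ≤ 0 := by
  have : Nonempty K := ⟨⟨P x, hP.mem x⟩⟩
  refine (norm_eq_iInf_iff_real_inner_le_zero hK (hP.mem x)).1 ?_ z hz
  exact le_antisymm (le_ciInf fun w => hP.norm_sub_le x w.2)
    (ciInf_le ⟨0, by rintro r ⟨w, rfl⟩; positivity⟩ (⟨P x, hP.mem x⟩ : K))

theorem eq_of_norm_sub_le (hP : IsNearestPointMap K P) (hK : Convex ℝ K) (x : E) {a : E}
    (ha : a ∈ K) (h : ‖x - a‖ ≤ ‖x - P x‖) : a = P x := by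
  have hpyth : ‖x - a‖ ^ 2 = ‖x - P x‖ ^ 2 - 2 * ⟪x - P x, a - P x⟫ + ‖a - P x‖ ^ 2 := by
    rw [← norm_sub_sq_real, sub_sub_sub_cancel_right]
  have hinner := hP.inner_sub_nonpos hK x ha
  have hzero : ‖a - P x‖ = 0 := by
    nlinarith [norm_nonneg (x - a), norm_nonneg (a - P x)]
  exact sub_eq_zero.1 (norm_eq_zero.1 hzero)

theorem lipschitzWith_one (hP : IsNearestPointMap K P) (hK : Convex ℝ K) : LipschitzWith 1 P :=
  LipschitzWith.of_dist_le_mul fun u v => by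
    simpa [dist_eq_norm] using norm_sub_le_of_inner_nonpos
      (hP.inner_sub_nonpos hK u (hP.mem v)) (hP.inner_sub_nonpos hK v (hP.mem u))

end IsNearestPointMap

section TwoSets

variable {K₁ K₂ : Set E} {P₁ P₂ : E → E}

theorem proj_comp_eq_of_norm_sub_eq (hP₁ : IsNearestPointMap K₁ P₁)
    (hP₂ : IsNearestPointMap K₂ P₂) (hK₁ : Convex ℝ K₁) {q : E} (hq : q ∈ K₁)
    (h : ‖P₁ (P₂ q) - P₂ (P₁ (P₂ q))‖ = ‖q - P₂ q‖) : P₁ (P₂ q) = q := by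
  refine (hP₁.eq_of_norm_sub_le hK₁ (P₂ q) hq ?_).symm
  calc ‖P₂ q - q‖ = ‖P₁ (P₂ q) - P₂ (P₁ (P₂ q))‖ := by rw [h, norm_sub_rev]
    _ ≤ ‖P₁ (P₂ q) - P₂ q‖ := hP₂.norm_sub_le _ (hP₂.mem q)
    _ = ‖P₂ q - P₁ (P₂ q)‖ := norm_sub_rev _ _

theorem isLeast_norm_sub_of_proj_comp_eq (hP₁ : IsNearestPointMap K₁ P₁)
    (hP₂ : IsNearestPointMap K₂ P₂) (hK₁ : Convex ℝ K₁) (hK₂ : Convex ℝ K₂) {a : E}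
    (ha : P₁ (P₂ a) = a) :
    IsLeast {d : ℝ | ∃ u ∈ K₁, ∃ v ∈ K₂, d = ‖u - v‖} ‖a - P₂ a‖ := by
  refine ⟨⟨a, ha ▸ hP₁.mem _, P₂ a, hP₂.mem a, rfl⟩, ?_⟩
  rintro d ⟨u, hu, v, hv, rfl⟩
  have hua : ⟪u - a, P₂ a - a⟫ ≤ 0 := by
    rw [real_inner_comm]
    simpa only [ha] using hP₁.inner_sub_nonpos hK₁ (P₂ a) hu
  have hvb : ⟪v - P₂ a, a - P₂ a⟫ ≤ 0 := by
    simpa only [real_inner_comm] using hP₂.inner_sub_nonpos hK₂ a hv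
  exact norm_sub_le_of_inner_nonpos hua hvb

end TwoSets

end InnerProductSpace

theorem alternating_succ_eq {α : Type*} {f g : α → α} {x : ℕ → α}
    (hx : ∀ m, x (m + 1) = if Even m then f (x m) else g (x m)) (m : ℕ) :
    x (2 * m + 1) = f (x (2 * m)) ∧ x (2 * m + 2) = g (x (2 * m + 1)) := by
  refine ⟨by rw [hx, if_pos (even_two_mul m)], ?_⟩
  rw [hx, if_neg (Nat.not_even_iff_odd.2 (odd_two_mul_add_one m))]

theorem pocs_nonintersecting_oscillation_general (n : ℕ) (K₁ K₂ : Set (EuclideanSpace ℝ (Fin n)))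
    (hclosed₁ : IsClosed K₁)
    (hconv₁ : Convex ℝ K₁) (hconv₂ : Convex ℝ K₂)
    (hbdd : Bornology.IsBounded K₁)
    (P₁ P₂ : EuclideanSpace ℝ (Fin n) → EuclideanSpace ℝ (Fin n))
    (hP₁ : ∀ x, P₁ x ∈ K₁ ∧ ∀ y ∈ K₁, ‖x - P₁ x‖ ≤ ‖x - y‖)
    (hP₂ : ∀ x, P₂ x ∈ K₂ ∧ ∀ y ∈ K₂, ‖x - P₂ x‖ ≤ ‖x - y‖)
    (x : ℕ → EuclideanSpace ℝ (Fin n))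
    (hx : ∀ m : ℕ, x (m + 1) = if Even m then P₁ (x m) else P₂ (x m)) :
    ∃ a ∈ K₁, ∃ b ∈ K₂,
      Tendsto (fun m : ℕ => x (2 * m + 1)) atTop (𝓝 a) ∧
      Tendsto (fun m : ℕ => x (2 * m + 2)) atTop (𝓝 b) ∧
      ‖a - b‖ = sInf {d : ℝ | ∃ u ∈ K₁, ∃ v ∈ K₂, d = ‖u - v‖} := by
  have hP₁ : IsNearestPointMap K₁ P₁ := hP₁
  have hP₂ : IsNearestPointMap K₂ P₂ := hP₂
  have hlip₂ := hP₂.lipschitzWith_one hconv₂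
  have hlip : LipschitzWith 1 (P₁ ∘ P₂) := by
    simpa using (hP₁.lipschitzWith_one hconv₁).comp hlip₂
  have hodd (m : ℕ) : x (2 * (m + 1) + 1) = P₁ (P₂ (x (2 * m + 1))) := by
    rw [(alternating_succ_eq hx (m + 1)).1, mul_add_one, (alternating_succ_eq hx m).2]
  have hcpt : IsCompact K₁ := Metric.isCompact_iff_isClosed_bounded.2 ⟨hclosed₁, hbdd⟩
  obtain ⟨a, haK, hfix, φ, hφ, hφa⟩ := exists_isFixedPt_tendsto_subseq_of_lyapunov
    (T := P₁ ∘ P₂) (V := fun q => ‖q - P₂ q‖) hcpt.isSeqCompact hlip.continuous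
    (continuous_id.sub hlip₂.continuous).norm (fun q => norm_sub_proj_comp_le hP₁ hP₂)
    (fun q => proj_comp_eq_of_norm_sub_eq hP₁ hP₂ hconv₁)
    (y := fun m => x (2 * m + 1)) (fun m => (alternating_succ_eq hx m).1 ▸ hP₁.mem _) hodd
  have hodd_lim := tendsto_of_lipschitzWith_one_of_tendsto_subseq hlip hfix hodd hφ hφa
  refine ⟨a, haK, P₂ a, hP₂.mem a, hodd_lim, ?_,
    (isLeast_norm_sub_of_proj_comp_eq hP₁ hP₂ hconv₁ hconv₂ hfix).csInf_eq.symm⟩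
  simpa only [(alternating_succ_eq hx _).2, Function.comp_def] using
    (hlip₂.continuous.tendsto a).comp hodd_lim

/-- Gubin–Polyak–Raik: if `K₁ ∩ K₂ = ∅` and `K₁` is bounded, the odd-indexed alternating
projection iterates converge to `a ∈ K₁` and the even-indexed ones (from index 2 on) to
`b ∈ K₂`, where `‖a - b‖` equals the distance between the two sets. -/
theorem pocs_nonintersecting_oscillation (n : ℕ) (K₁ K₂ : Set (EuclideanSpace ℝ (Fin n)))
    (hne₁ : K₁.Nonempty) (hne₂ : K₂.Nonempty)
    (hclosed₁ : IsClosed K₁) (hclosed₂ : IsClosed K₂)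
    (hconv₁ : Convex ℝ K₁) (hconv₂ : Convex ℝ K₂)
    (hdisj : K₁ ∩ K₂ = ∅) (hbdd : Bornology.IsBounded K₁)
    (P₁ P₂ : EuclideanSpace ℝ (Fin n) → EuclideanSpace ℝ (Fin n))
    (hP₁ : ∀ x, P₁ x ∈ K₁ ∧ ∀ y ∈ K₁, ‖x - P₁ x‖ ≤ ‖x - y‖)
    (hP₂ : ∀ x, P₂ x ∈ K₂ ∧ ∀ y ∈ K₂, ‖x - P₂ x‖ ≤ ‖x - y‖)
    (x : ℕ → EuclideanSpace ℝ (Fin n))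
    (hx : ∀ m : ℕ, x (m + 1) = if Even m then P₁ (x m) else P₂ (x m)) :
    ∃ a ∈ K₁, ∃ b ∈ K₂,
      Tendsto (fun m : ℕ => x (2 * m + 1)) atTop (𝓝 a) ∧
      Tendsto (fun m : ℕ => x (2 * m + 2)) atTop (𝓝 b) ∧
      ‖a - b‖ = sInf {d : ℝ | ∃ u ∈ K₁, ∃ v ∈ K₂, d = ‖u - v‖} :=
  pocs_nonintersecting_oscillation_general n K₁ K₂ hclosed₁ hconv₁ hconv₂ hbdd P₁ P₂ hP₁ hP₂ x hx
end

section
/- Let f : ℝⁿ → ℝ satisfy f ≥ 0, suppose f attains its global minimum at a unique point w* , and let K₁ = C_s = {(u, t) ∈ ℝⁿ × ℝ : t ≤ 0} and K₂ = C_f = {(w, y) ∈ ℝⁿ × ℝ : f(w) ≤ y} with f convex and continuous. If a ∈ K₁ and b ∈ K₂ satisfy ‖a − b‖ = inf{‖p − q‖ : p ∈ K₁, q ∈ K₂}, then b = (w*, f(w*)) and a = (w*, 0). In particular, any pair of nearest points of the level set and of the epigraph identifies the global minimizer w* of f. -/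
/-!
Every point `q` of the epigraph lies at height at least `f q.1 ≥ f w*` above every point `p` of the
half-space `{y ≤ 0}`, so `‖p - q‖ ≥ f w*`; the vertical segment from `(w*, 0)` to `(w*, f w*)`
attains this bound. For a nearest pair `(a, b)` all the inequalities in this chain are therefore
equalities: the horizontal part of `a - b` vanishes, `a` lies on `{y = 0}`, `b` on the graph of `f`,
and `f b.1 = f w*`, which by uniqueness of the minimizer forces `b.1 = w*`.
-/

namespace WithLp

variable {E F : Type*}

lemma fst_eq_zero_of_norm_le_norm_snd [NormedAddCommGroup E] [SeminormedAddCommGroup F]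
    {x : WithLp 2 (E × F)} (h : ‖x‖ ≤ ‖x.snd‖) : x.fst = 0 := by
  have hsq : ‖x‖ ^ 2 ≤ ‖x.snd‖ ^ 2 := pow_le_pow_left₀ (norm_nonneg _) h 2
  rw [prod_norm_sq_eq_of_L2] at hsq
  exact norm_eq_zero.mp (pow_eq_zero_iff two_ne_zero |>.mp
    (le_antisymm (by linarith) (sq_nonneg _)))

lemma norm_toLp_sub_toLp_of_fst_eq_s18 [SeminormedAddCommGroup E] [SeminormedAddCommGroup F]
    (x : E) (y z : F) : ‖toLp 2 (x, y) - toLp 2 (x, z)‖ = ‖y - z‖ := by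
  rw [← toLp_sub, Prod.mk_sub_mk, sub_self, norm_toLp_snd]

lemma snd_sub_snd_le_norm_sub [SeminormedAddCommGroup E] (p q : WithLp 2 (E × ℝ)) :
    q.snd - p.snd ≤ ‖p - q‖ :=
  calc q.snd - p.snd = -(p - q).snd := by rw [sub_snd, neg_sub]
    _ ≤ ‖(p - q).snd‖ := neg_le_abs _
    _ ≤ ‖p - q‖ := (p - q).norm_snd_le

end WithLp

section

variable {n : ℕ} {f : EuclideanSpace ℝ (Fin n) → ℝ}

lemma le_snd_sub_snd_of_mem_levelSet_of_mem_epigraphSet {p q : LiftedSpace n}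
    (hp : p ∈ levelSet n) (hq : q ∈ epigraphSet n f) : f q.fst ≤ q.snd - p.snd := by
  have hp' : p.snd ≤ 0 := hp
  have hq' : f q.fst ≤ q.snd := hq
  linarith

lemma sInf_norm_sub_levelSet_epigraphSet {wstar : EuclideanSpace ℝ (Fin n)}
    (hmin : ∀ w, f wstar ≤ f w) (hf0 : 0 ≤ f wstar) :
    sInf {d : ℝ | ∃ p ∈ levelSet n, ∃ q ∈ epigraphSet n f, d = ‖p - q‖} = f wstar := by
  refine IsLeast.csInf_eq ⟨⟨WithLp.toLp 2 (wstar, 0), (le_rfl : (0 : ℝ) ≤ 0),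
    WithLp.toLp 2 (wstar, f wstar), (le_rfl : f wstar ≤ f wstar), ?_⟩, ?_⟩
  · rw [WithLp.norm_toLp_sub_toLp_of_fst_eq_s18, zero_sub, norm_neg, Real.norm_of_nonneg hf0]
  · rintro _ ⟨p, hp, q, hq, rfl⟩
    calc f wstar ≤ f q.fst := hmin _
      _ ≤ q.snd - p.snd := le_snd_sub_snd_of_mem_levelSet_of_mem_epigraphSet hp hq
      _ ≤ ‖p - q‖ := WithLp.snd_sub_snd_le_norm_sub p q

end

theorem nearest_points_identify_minimizer_general (n : ℕ) (f : EuclideanSpace ℝ (Fin n) → ℝ)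
    (hf0 : ∀ w, 0 ≤ f w)
    (wstar : EuclideanSpace ℝ (Fin n)) (hmin : ∀ w, f wstar ≤ f w)
    (huniq : ∀ w, f w = f wstar → w = wstar)
    (a b : LiftedSpace n) (ha : a ∈ levelSet n) (hb : b ∈ epigraphSet n f)
    (hdist : ‖a - b‖ = sInf {d : ℝ | ∃ p ∈ levelSet n, ∃ q ∈ epigraphSet n f, d = ‖p - q‖}) :
    b = (WithLp.equiv 2 (EuclideanSpace ℝ (Fin n) × ℝ)).symm (wstar, f wstar) ∧
    a = (WithLp.equiv 2 (EuclideanSpace ℝ (Fin n) × ℝ)).symm (wstar, 0) := by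
  rw [sInf_norm_sub_levelSet_epigraphSet hmin (hf0 wstar)] at hdist
  have ha' : a.snd ≤ 0 := ha
  have hb' : f b.fst ≤ b.snd := hb
  have hvert := WithLp.snd_sub_snd_le_norm_sub a b
  have hb₁ : b.fst = wstar := huniq _ (by linarith [hmin b.fst])
  have hb₂ : b.snd = f wstar := by linarith [hmin b.fst]
  have ha₂ : a.snd = 0 := by linarith [hmin b.fst]
  have hhor : (a - b).fst = 0 := by
    refine WithLp.fst_eq_zero_of_norm_le_norm_snd ?_
    rw [WithLp.sub_snd, Real.norm_eq_abs, abs_sub_comm]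
    linarith [le_abs_self (b.snd - a.snd)]
  have ha₁ : a.fst = wstar := (sub_eq_zero.mp hhor).trans hb₁
  exact ⟨WithLp.ofLp_injective 2 (Prod.ext hb₁ hb₂), WithLp.ofLp_injective 2 (Prod.ext ha₁ ha₂)⟩

/-- For `f ≥ 0` convex and continuous with unique global minimizer `wstar`: any pair of
nearest points `a ∈ C_s`, `b ∈ C_f` of the level set and the epigraph must be
`a = (wstar, 0)` and `b = (wstar, f wstar)`, so such a pair identifies the minimizer. -/
theorem nearest_points_identify_minimizer (n : ℕ) (f : EuclideanSpace ℝ (Fin n) → ℝ)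
    (hf0 : ∀ w, 0 ≤ f w) (hconv : ConvexOn ℝ Set.univ f) (hcont : Continuous f)
    (wstar : EuclideanSpace ℝ (Fin n)) (hmin : ∀ w, f wstar ≤ f w)
    (huniq : ∀ w, f w = f wstar → w = wstar)
    (a b : LiftedSpace n) (ha : a ∈ levelSet n) (hb : b ∈ epigraphSet n f)
    (hdist : ‖a - b‖ = sInf {d : ℝ | ∃ p ∈ levelSet n, ∃ q ∈ epigraphSet n f, d = ‖p - q‖}) :
    b = (WithLp.equiv 2 (EuclideanSpace ℝ (Fin n) × ℝ)).symm (wstar, f wstar) ∧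
    a = (WithLp.equiv 2 (EuclideanSpace ℝ (Fin n) × ℝ)).symm (wstar, 0) :=
  nearest_points_identify_minimizer_general n f hf0 wstar hmin huniq a b ha hb hdist
end
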